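/- Let A be a finite set, H > 0 a real number, g : A → [0, H] a function, α > 0, and p, p* probability distributions on A with p(a) > 0 for all a. Define q on A by q(a) = p(a)·exp(α·g(a)) / Σ_{a'} p(a')·exp(α·g(a')). Then Σ_a g(a)·(p*(a) − p(a)) ≤ α·H²/2 + (1/α)·[D_KL(p* ‖ p) − D_KL(p* ‖ q)]. -/

import Mathlib

/-! The update satisfies `D(p*‖p) - D(p*‖q) = α ⟪g, p*⟫ - log Z` with `Z = ∑ p e^{α g}` its
normaliser, so the claim is the Hoeffding-type bound `log Z ≤ α ⟪g, p⟫ + α² H² / 2`. That bound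
comes from `e^t ≤ 1 + t + t² / 2` for `t ≤ 0`, applied to `t = α (g - H)`, followed by
`1 + x ≤ e^x`. -/

open Finset

/-- Kullback–Leibler divergence between probability mass functions on a finite type. -/
noncomputable def KLdiv {A : Type*} [Fintype A] (p q : A → ℝ) : ℝ :=
  ∑ a, p a * Real.log (p a / q a)

open Real

theorem exp_le_one_add_add_sq_div_two_of_nonpos {t : ℝ} (ht : t ≤ 0) :
    exp t ≤ 1 + t + t ^ 2 / 2 := by
  have hderiv (x : ℝ) : HasDerivAt (fun x ↦ exp (-x) * (1 + x + x ^ 2 / 2))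
      (-(exp (-x) * (x ^ 2 / 2))) x := by
    refine (((hasDerivAt_neg x).exp).mul
      (((hasDerivAt_id' x).const_add 1).add ((hasDerivAt_pow 2 x).div_const 2))).congr_deriv ?_
    simp only [Nat.cast_ofNat, Pi.add_apply]
    ring
  have hanti := antitone_of_hasDerivAt_nonpos hderiv fun x ↦ by
    simp only [Pi.zero_apply, neg_nonpos]
    positivity
  have := hanti ht
  simp only [neg_zero, exp_zero, one_mul, ne_eq, OfNat.ofNat_ne_zero,
    not_false_eq_true, zero_pow, zero_div, add_zero] at this
  rwa [exp_neg, le_inv_mul_iff₀ (exp_pos t), mul_one] at this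

theorem sum_mul_exp_le_exp_of_mem_Icc {A : Type*} [Fintype A] {p g : A → ℝ} {m M α : ℝ}
    (hp : ∀ a, 0 ≤ p a) (hp1 : ∑ a, p a = 1) (hg : ∀ a, g a ∈ Set.Icc m M) (hα : 0 ≤ α) :
    ∑ a, p a * exp (α * g a) ≤ exp (α * ∑ a, p a * g a + α ^ 2 * (M - m) ^ 2 / 2) := by
  have hpoint (a : A) :
      exp (α * g a) ≤ exp (α * M) * (1 + α * (g a - M) + α ^ 2 * (M - m) ^ 2 / 2) := by
    obtain ⟨hmg, hgM⟩ := hg a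
    have hsq : (α * (g a - M)) ^ 2 ≤ α ^ 2 * (M - m) ^ 2 := by
      rw [mul_pow]
      exact mul_le_mul_of_nonneg_left (by nlinarith) (sq_nonneg α)
    calc exp (α * g a) = exp (α * M) * exp (α * (g a - M)) := by rw [← exp_add]; ring_nf
      _ ≤ _ := by
        gcongr
        have := exp_le_one_add_add_sq_div_two_of_nonpos
          (mul_nonpos_of_nonneg_of_nonpos hα (sub_nonpos.2 hgM))
        linarith
  calc ∑ a, p a * exp (α * g a)
      ≤ ∑ a, p a * (exp (α * M) * (1 + α * (g a - M) + α ^ 2 * (M - m) ^ 2 / 2)) :=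
        sum_le_sum fun a _ ↦ mul_le_mul_of_nonneg_left (hpoint a) (hp a)
    _ = exp (α * M) * ∑ a, p a * (1 + α * (g a - M) + α ^ 2 * (M - m) ^ 2 / 2) := by
        simp only [mul_left_comm (p _), mul_sum]
    _ = exp (α * M) * (1 + (α * (∑ a, p a * g a - M) + α ^ 2 * (M - m) ^ 2 / 2)) := by
        simp only [mul_add, mul_sub, mul_one, sum_add_distrib, sum_sub_distrib, ← sum_mul,
          mul_left_comm _ α, ← mul_sum, hp1]
        ring
    _ ≤ exp (α * M) * exp (α * (∑ a, p a * g a - M) + α ^ 2 * (M - m) ^ 2 / 2) := by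
        gcongr
        linarith [add_one_le_exp (α * (∑ a, p a * g a - M) + α ^ 2 * (M - m) ^ 2 / 2)]
    _ = exp (α * ∑ a, p a * g a + α ^ 2 * (M - m) ^ 2 / 2) := by rw [← exp_add]; ring_nf

section expTilt

variable {A : Type*} [Fintype A]

/-- The exponentiated-gradient (mirror-descent) update of `p` along `f`. -/
noncomputable def expTilt (p f : A → ℝ) (a : A) : ℝ :=
  p a * exp (f a) / ∑ b, p b * exp (f b)

theorem nonempty_of_sum_eq_one {r : A → ℝ} (hr : ∑ a, r a = 1) : Nonempty A :=
  univ_nonempty_iff.1 (nonempty_of_sum_ne_zero (hr ▸ one_ne_zero))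

theorem sum_mul_exp_pos {p : A → ℝ} (f : A → ℝ) (hp : ∀ a, 0 < p a) [Nonempty A] :
    0 < ∑ a, p a * exp (f a) :=
  sum_pos (fun a _ ↦ mul_pos (hp a) (exp_pos _)) univ_nonempty

theorem KLdiv_sub_KLdiv_expTilt {p r : A → ℝ} (f : A → ℝ) (hp : ∀ a, 0 < p a)
    (hr : ∑ a, r a = 1) :
    KLdiv r p - KLdiv r (expTilt p f) = ∑ a, r a * f a - log (∑ a, p a * exp (f a)) := by
  have := nonempty_of_sum_eq_one hr
  have hZ := sum_mul_exp_pos f hp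
  have hterm (a : A) : r a * log (r a / p a) - r a * log (r a / expTilt p f a) =
      r a * f a - r a * log (∑ b, p b * exp (f b)) := by
    rcases eq_or_ne (r a) 0 with hra | hra
    · simp [hra]
    have hq : 0 < expTilt p f a := div_pos (mul_pos (hp a) (exp_pos _)) hZ
    rw [← mul_sub, ← log_div (div_ne_zero hra (hp a).ne') (div_ne_zero hra hq.ne'),
      div_div_div_cancel_left' _ _ hra, expTilt, mul_div_assoc, mul_div_cancel_left₀ _ (hp a).ne',
      log_div (exp_pos _).ne' hZ.ne', log_exp, mul_sub]
  rw [KLdiv, KLdiv, ← sum_sub_distrib]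
  simp only [hterm]
  rw [sum_sub_distrib, ← sum_mul, hr, one_mul]

end expTilt

theorem stmt3_general {A : Type*} [Fintype A] (H : ℝ)
    (g : A → ℝ) (hg : ∀ a, g a ∈ Set.Icc (0:ℝ) H)
    (α : ℝ) (hα : 0 < α)
    (p pstar : A → ℝ)
    (hp : (∀ a, 0 < p a) ∧ ∑ a, p a = 1)
    (hpstar : (∀ a, 0 ≤ pstar a) ∧ ∑ a, pstar a = 1)
    (q : A → ℝ)
    (hq : ∀ a, q a = p a * Real.exp (α * g a) / ∑ a', p a' * Real.exp (α * g a')) :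
    ∑ a, g a * (pstar a - p a) ≤
      α * H^2 / 2 + (1/α) * (KLdiv pstar p - KLdiv pstar q) := by
  have := nonempty_of_sum_eq_one hp.2
  have hq' : q = expTilt p (fun a ↦ α * g a) := funext hq
  have hZ := sum_mul_exp_le_exp_of_mem_Icc (fun a ↦ (hp.1 a).le) hp.2 hg hα.le
  rw [sub_zero] at hZ
  set Z := ∑ a, p a * exp (α * g a)
  have hlogZ : α⁻¹ * log Z ≤ ∑ a, p a * g a + α * H ^ 2 / 2 :=
    calc α⁻¹ * log Z ≤ α⁻¹ * (α * ∑ a, p a * g a + α ^ 2 * H ^ 2 / 2) := by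
          gcongr
          exact (log_le_iff_le_exp (sum_mul_exp_pos _ hp.1)).2 hZ
      _ = ∑ a, p a * g a + α * H ^ 2 / 2 := by field_simp
  have hgain : ∑ a, g a * (pstar a - p a) = ∑ a, pstar a * g a - ∑ a, p a * g a := by
    simp only [mul_comm (g _), sub_mul, sum_sub_distrib]
  have hlin : ∑ a, pstar a * (α * g a) = α * ∑ a, pstar a * g a := by
    simp only [mul_left_comm _ α, ← mul_sum]
  rw [hq', KLdiv_sub_KLdiv_expTilt _ hp.1 hpstar.2, hgain, hlin, mul_sub, one_div,
    inv_mul_cancel_left₀ hα.ne']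
  linarith

theorem stmt3 {A : Type*} [Fintype A] (H : ℝ) (hH : 0 < H)
    (g : A → ℝ) (hg : ∀ a, g a ∈ Set.Icc (0:ℝ) H)
    (α : ℝ) (hα : 0 < α)
    (p pstar : A → ℝ)
    (hp : (∀ a, 0 < p a) ∧ ∑ a, p a = 1)
    (hpstar : (∀ a, 0 ≤ pstar a) ∧ ∑ a, pstar a = 1)
    (q : A → ℝ)
    (hq : ∀ a, q a = p a * Real.exp (α * g a) / ∑ a', p a' * Real.exp (α * g a')) :
    ∑ a, g a * (pstar a - p a) ≤
      α * H^2 / 2 + (1/α) * (KLdiv pstar p - KLdiv pstar q) :=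
  stmt3_general H g hg α hα p pstar hp hpstar q hq
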